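/- Let 𝔧 be a strongly stable ideal in R, m a positive integer, and 𝔊 a [𝔧,m]-marked basis. Then every homogeneous syzygy of 𝔧 lifts to a syzygy of 𝔊: for each Eliahou–Kervaire syzygy x_i x^{α_1} − x^δ x^{α_2} = 0 of the monomial generators (with x_i > max(x^{α_1}) and x^δ x^{α_2} = x^{α_2} ∗_𝔧 x^δ), there is a corresponding relation among the polynomials of 𝔊 reducing x_i f_{α_1} to a combination of multiples x^{δ_j} f_{α_j} with x^{δ_j} x^{α_j} = x^{α_j} ∗_𝔧 x^{δ_j}. -/

import Mathlib

open MvPolynomial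

namespace Paper

/-- Monomials (exponent vectors) in `N` variables. -/
abbrev Mon (N : ℕ) := Fin N →₀ ℕ

variable {N : ℕ}

/-- Total degree of a monomial. -/
def mdeg (u : Mon N) : ℕ := u.sum fun _ e => e

/-- `BorelStep a b` : `b` is obtained from `a` by one increasing elementary move,
i.e. `x^a · x_j = x^b · x_i` with `i < j`. -/
def BorelStep (a b : Mon N) : Prop :=
  ∃ i j : Fin N, i < j ∧ a + Finsupp.single j 1 = b + Finsupp.single i 1

/-- `BorelLt a b` : `a <_B b`, i.e. `b` is obtained from `a` by a nonempty
sequence of increasing elementary moves. -/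
def BorelLt (a b : Mon N) : Prop := Relation.TransGen BorelStep a b

/-- A (combinatorially encoded) monomial ideal: a set of monomials closed
under multiplication by monomials. -/
def MonIdeal (J : Set (Mon N)) : Prop := ∀ u ∈ J, ∀ d : Mon N, u + d ∈ J

/-- A strongly stable monomial ideal. -/
def StronglyStable (J : Set (Mon N)) : Prop :=
  MonIdeal J ∧ ∀ b ∈ J, ∀ a, BorelLt b a → a ∈ J

/-- The minimal monomial basis `B_J` of a monomial ideal. -/
def MinBasis (J : Set (Mon N)) : Set (Mon N) :=
  {u | u ∈ J ∧ ∀ v ∈ J, v ≤ u → v = u}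

/-- `min(x^a) ≥ max(x^h)`. -/
def StarCond (a h : Mon N) : Prop :=
  ∀ i j : Fin N, a i ≠ 0 → h j ≠ 0 → j ≤ i


variable (K : Type) [Field K]

/-- The monomial `x^u` as a polynomial. -/
noncomputable def mono {N : ℕ} (u : Mon N) : MvPolynomial (Fin N) K :=
  MvPolynomial.monomial u (1 : K)

/-- The (actual) monomial ideal of `S` spanned by a set of monomials. -/
noncomputable def idealOf {N : ℕ} (J : Set (Mon N)) : Ideal (MvPolynomial (Fin N) K) :=
  Ideal.span (mono K '' J)

/-- The irrelevant maximal ideal `(x_0, …, x_n)`. -/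
noncomputable def irrel (N : ℕ) : Ideal (MvPolynomial (Fin N) K) :=
  Ideal.span (Set.range MvPolynomial.X)

/-- The saturation `I^sat = ⋃_j (I : (x_0,…,x_n)^j)`. -/
noncomputable def satIdeal {N : ℕ} (I : Ideal (MvPolynomial (Fin N) K)) :
    Ideal (MvPolynomial (Fin N) K) :=
  ⨆ k : ℕ, Submodule.colon I ((irrel K N ^ k : Ideal (MvPolynomial (Fin N) K)) : Set (MvPolynomial (Fin N) K))

/-- The satiety of a homogeneous ideal: the smallest `m` such that
`I_t = (I^sat)_t` for all `t ≥ m`. -/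
noncomputable def satiety {N : ℕ} (I : Ideal (MvPolynomial (Fin N) K)) : ℕ :=
  sInf {m | ∀ t, m ≤ t → ∀ p : MvPolynomial (Fin N) K,
    p.IsHomogeneous t → (p ∈ I ↔ p ∈ satIdeal K I)}

/-- The saturation of a combinatorial monomial ideal. -/
def msat {N : ℕ} (J : Set (Mon N)) : Set (Mon N) :=
  {u | ∃ k : ℕ, ∀ d : Mon N, mdeg d = k → u + d ∈ J}

/-- The satiety of a combinatorial monomial ideal. -/
noncomputable def msatiety {N : ℕ} (J : Set (Mon N)) : ℕ :=
  sInf {m | ∀ u : Mon N, m ≤ mdeg u → (u ∈ J ↔ u ∈ msat J)}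

/-- A non-homogeneous `𝔧`-marked set: marked polynomials `f_α` with pairwise
distinct head terms forming `B_𝔧` and tails supported outside `𝔧`. -/
def NHMarkedSet {N : ℕ} (𝔧 : Set (Mon N)) (f : Mon N → MvPolynomial (Fin N) K) : Prop :=
  ∀ α ∈ MinBasis 𝔧,
    MvPolynomial.coeff α (f α) = 1 ∧
    ∀ u ∈ (f α).support, u ≠ α → u ∉ 𝔧

/-- One step of the `𝔊_∗`-reduction: the monomial `x^γ = x^α ∗_𝔧 x^η` of the
support of `g` is replaced by `x^η · T(f_α)`. -/
def RStep {N : ℕ} (𝔧 : Set (Mon N)) (f : Mon N → MvPolynomial (Fin N) K)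
    (g g₁ : MvPolynomial (Fin N) K) : Prop :=
  ∃ γ α η : Mon N, γ ∈ g.support ∧ γ ∈ 𝔧 ∧ α ∈ MinBasis 𝔧 ∧ γ = α + η ∧
    StarCond α η ∧
    g₁ = g - MvPolynomial.coeff γ g • (mono K η * f α)

/-- The `𝔊_∗`-reduction relation (reflexive-transitive closure of `RStep`). -/
def Reduces {N : ℕ} (𝔧 : Set (Mon N)) (f : Mon N → MvPolynomial (Fin N) K) :
    MvPolynomial (Fin N) K → MvPolynomial (Fin N) K → Prop :=
  Relation.ReflTransGen (RStep K 𝔧 f)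

/-- `g` is reduced: `supp(g) ∩ 𝔧 = ∅`. -/
def IsReducedPoly {N : ℕ} (𝔧 : Set (Mon N)) (g : MvPolynomial (Fin N) K) : Prop :=
  ∀ u ∈ g.support, u ∉ 𝔧

/-- A `[𝔧,m]`-marked set: a n.h. `𝔧`-marked set whose tails are supported in
`N(𝔧)_{≤ max{m,|α|}}`. -/
def JmMarkedSet {N : ℕ} (𝔧 : Set (Mon N)) (m : ℕ)
    (f : Mon N → MvPolynomial (Fin N) K) : Prop :=
  ∀ α ∈ MinBasis 𝔧,
    MvPolynomial.coeff α (f α) = 1 ∧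
    ∀ u ∈ (f α).support, u ≠ α → (u ∉ 𝔧 ∧ mdeg u ≤ max m (mdeg α))

/-- The ideal `(𝔊)` generated by a marked set. -/
noncomputable def idealG {N : ℕ} (𝔧 : Set (Mon N))
    (f : Mon N → MvPolynomial (Fin N) K) : Ideal (MvPolynomial (Fin N) K) :=
  Ideal.span (f '' MinBasis 𝔧)

/-- A `[𝔧,m]`-completion of `𝔊`: marked polynomials `f_β ∈ (𝔊)` with pairwise
distinct head terms the monomials of `𝔧_{≤m} \ B_𝔧` and tails in `N(𝔧)_{≤m}`. -/
def IsCompletion {N : ℕ} (𝔧 : Set (Mon N)) (m : ℕ)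
    (f h : Mon N → MvPolynomial (Fin N) K) : Prop :=
  ∀ β : Mon N, β ∈ 𝔧 → mdeg β ≤ m → β ∉ MinBasis 𝔧 →
    h β ∈ idealG K 𝔧 f ∧
    MvPolynomial.coeff β (h β) = 1 ∧
    ∀ u ∈ (h β).support, u ≠ β → (u ∉ 𝔧 ∧ mdeg u ≤ m)

/-- `g'` is a `[𝔧,m]`-reduced form of `g` modulo `(𝔊)`. -/
def IsReducedForm {N : ℕ} (𝔧 : Set (Mon N)) (m : ℕ)
    (f : Mon N → MvPolynomial (Fin N) K)
    (g g' : MvPolynomial (Fin N) K) : Prop :=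
  (∀ u ∈ g'.support, u ∉ 𝔧 ∧ mdeg u ≤ max m g.totalDegree) ∧
  g - g' ∈ idealG K 𝔧 f

/-- `R_{≤ t}`: the `K`-subspace of polynomials of degree at most `t`. -/
noncomputable def degLE (N : ℕ) (t : ℕ) : Submodule K (MvPolynomial (Fin N) K) where
  carrier := {g | ∀ u ∈ g.support, mdeg u ≤ t}
  zero_mem' := by simp
  add_mem' := by
    intro a b ha hb u hu
    rcases Finset.mem_union.mp (MvPolynomial.support_add hu) with h | h
    · exact ha u h
    · exact hb u h
  smul_mem' := by
    intro c a ha u hu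
    exact ha u (MvPolynomial.support_smul hu)

/-- `⟨N(𝔧)_{≤t}⟩`: the `K`-span of the monomials outside `𝔧` of degree `≤ t`. -/
noncomputable def spanNLE {N : ℕ} (𝔧 : Set (Mon N)) (t : ℕ) :
    Submodule K (MvPolynomial (Fin N) K) :=
  Submodule.span K (mono K '' {u : Mon N | u ∉ 𝔧 ∧ mdeg u ≤ t})

/-- `(𝔊)_{≤t}`: the `K`-subspace of elements of `(𝔊)` of degree `≤ t`. -/
noncomputable def GleSub {N : ℕ} (𝔧 : Set (Mon N))
    (f : Mon N → MvPolynomial (Fin N) K) (t : ℕ) :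
    Submodule K (MvPolynomial (Fin N) K) :=
  (idealG K 𝔧 f).restrictScalars K ⊓ degLE K N t

/-- A `[𝔧,m]`-marked basis: a `[𝔧,m]`-marked set with
`R_{≤t} = ⟨N(𝔧)_{≤t}⟩ ⊕ (𝔊)_{≤t}` for all `t ≥ m`. -/
def JmMarkedBasis {N : ℕ} (𝔧 : Set (Mon N)) (m : ℕ)
    (f : Mon N → MvPolynomial (Fin N) K) : Prop :=
  JmMarkedSet K 𝔧 m f ∧
  ∀ t, m ≤ t →
    Disjoint (spanNLE K 𝔧 t) (GleSub K 𝔧 f t) ∧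
    spanNLE K 𝔧 t ⊔ GleSub K 𝔧 f t = degLE K N t

/-!
Every polynomial is a `K`-combination of products `x^η f_α` with `x^α x^η = x^α ∗_𝔧 x^η`
plus a polynomial supported outside `𝔧`: rewrite `x^α x^η` as `x^η f_α - x^η T(f_α)` and recurse
on the monomials of `x^η T(f_α)` lying in `𝔧`, whose `∗_𝔧`-cofactors decrease in the colex order.
For a polynomial of `(𝔊)` such as `x_i f_{α₁}` the remainder lies in `(𝔊)` and is supported on
`N(𝔧)`, so it vanishes because `⟨N(𝔧)_{≤t}⟩ ∩ (𝔊)_{≤t} = 0` for `t ≥ m`.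
-/

theorem MonIdeal.mem_of_le {J : Set (Mon N)} (hJ : MonIdeal J) {u v : Mon N} (hv : v ∈ J)
    (hvu : v ≤ u) : u ∈ J := by
  simpa [add_tsub_cancel_of_le hvu] using hJ v hv (u - v)

theorem StronglyStable.sub_single_mem {J : Set (Mon N)} (hJ : StronglyStable J) {γ : Mon N}
    {j k : Fin N} (hk : γ - Finsupp.single k 1 ∈ J) (hjk : j ≤ k) (hγj : γ j ≠ 0)
    (hγk : γ k ≠ 0) : γ - Finsupp.single j 1 ∈ J := by
  rcases hjk.eq_or_lt with rfl | hjk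
  · exact hk
  refine hJ.2 _ hk _ (.single ⟨j, k, hjk, ?_⟩)
  rw [tsub_add_cancel_of_le (Finsupp.single_le_iff.mpr (Nat.one_le_iff_ne_zero.mpr hγk)),
    tsub_add_cancel_of_le (Finsupp.single_le_iff.mpr (Nat.one_le_iff_ne_zero.mpr hγj))]

theorem starCond_zero (α : Mon N) : StarCond α 0 := fun _ _ _ h => absurd rfl h

theorem StarCond.add_single {α η : Mon N} {j : Fin N} (h : StarCond α η)
    (hj : ∀ i, α i ≠ 0 → j ≤ i) : StarCond α (η + Finsupp.single j 1) := by
  intro i k hi hk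
  by_cases hηk : η k = 0
  · have hkj : k = j := by
      by_contra hne
      simp [Finsupp.single_eq_of_ne' (Ne.symm hne), hηk] at hk
    exact hkj ▸ hj i hi
  · exact h i k hi hηk

theorem StronglyStable.exists_minBasis_add {J : Set (Mon N)} (hJ : StronglyStable J) {γ : Mon N}
    (hγ : γ ∈ J) : ∃ α η, α ∈ MinBasis J ∧ StarCond α η ∧ γ = α + η := by
  induction γ using WellFoundedLT.induction with
  | ind γ IH =>
  by_cases hmin : γ ∈ MinBasis J
  · exact ⟨γ, 0, hmin, starCond_zero γ, (add_zero γ).symm⟩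
  obtain ⟨v, hv, hvγ⟩ : ∃ v ∈ J, v < γ := by
    by_contra! h
    exact hmin ⟨hγ, fun v hv hvγ => by_contra fun hne => h v hv (lt_of_le_of_ne hvγ hne)⟩
  obtain ⟨k, hk⟩ : ∃ k, v k < γ k := by
    by_contra! h
    exact hvγ.not_ge fun s => h s
  have hγk : γ k ≠ 0 := by omega
  have hsupp : γ.support.Nonempty := ⟨k, Finsupp.mem_support_iff.mpr hγk⟩
  set j := γ.support.min' hsupp
  have hγj : γ j ≠ 0 := Finsupp.mem_support_iff.mp (γ.support.min'_mem hsupp)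
  have hj_le : ∀ i, γ i ≠ 0 → j ≤ i := fun i hi =>
    γ.support.min'_le i (Finsupp.mem_support_iff.mpr hi)
  have hγ_eq : γ = γ - Finsupp.single j 1 + Finsupp.single j 1 :=
    (tsub_add_cancel_of_le (Finsupp.single_le_iff.mpr (Nat.one_le_iff_ne_zero.mpr hγj))).symm
  have hk_mem : γ - Finsupp.single k 1 ∈ J := by
    refine hJ.1.mem_of_le hv fun s => ?_
    rcases eq_or_ne s k with rfl | hs
    · simp only [Finsupp.tsub_apply, Finsupp.single_eq_same]; omega
    · simpa [Finsupp.single_eq_of_ne' (Ne.symm hs)] using hvγ.le s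
  have hj_mem := hJ.sub_single_mem hk_mem (hj_le k hγk) hγj hγk
  have hlt : γ - Finsupp.single j 1 < γ := by
    conv_rhs => rw [hγ_eq]
    exact lt_add_of_pos_right _ (pos_iff_ne_zero.mpr (by simp))
  obtain ⟨α, η, hα, hstar, heq⟩ := IH _ hlt hj_mem
  refine ⟨α, η + Finsupp.single j 1, hα, hstar.add_single fun i hi => hj_le i ?_, ?_⟩
  · have := DFunLike.congr_fun heq i
    simp only [Finsupp.tsub_apply, Finsupp.add_apply] at this
    omega
  · rw [hγ_eq, heq, add_assoc]

theorem le_of_add_eq_of_toColex_le {u η α η' : Mon N} (heq : u + η = α + η')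
    (hstar : StarCond α η') (hle : toColex η ≤ toColex η') : α ≤ u := by
  -- `η'` exceeds `η` at the top index `t` where they differ, so `x_t ∣ x^{η'}` and `α` lives on
  -- indices `≥ t`, where `u` dominates it.
  have happ : ∀ s, u s + η s = α s + η' s := fun s => by
    simpa using DFunLike.congr_fun heq s
  rcases hle.eq_or_lt with hη | ⟨t, hgt, hlt⟩
  · cases toColex.injective hη
    exact fun s => by have := happ s; omega
  simp only [ofColex_toColex] at hgt hlt
  intro s
  rcases lt_trichotomy s t with hst | rfl | hst
  · have : α s = 0 := by
      by_contra hαs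
      exact absurd (hstar s t hαs (by omega)) (not_le.mpr hst)
    omega
  · have := happ s; omega
  · have := happ s; have := hgt s hst; omega

theorem toColex_lt_of_add_eq {J : Set (Mon N)} (hJ : MonIdeal J) {u η α η' : Mon N}
    (hu : u ∉ J) (hα : α ∈ J) (hstar : StarCond α η') (heq : u + η = α + η') :
    toColex η' < toColex η :=
  lt_of_not_ge fun hle => hu (hJ.mem_of_le hα (le_of_add_eq_of_toColex_le heq hstar hle))

/-- The `K`-span of the products `x^η f_α` with `x^α ∈ B_𝔧` and `x^α x^η = x^α ∗_𝔧 x^η`. -/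
noncomputable def starSpan (𝔧 : Set (Mon N)) (f : Mon N → MvPolynomial (Fin N) K) :
    Submodule K (MvPolynomial (Fin N) K) :=
  Submodule.span K ((fun p : Mon N × Mon N => mono K p.2 * f p.1) ''
    {p | p.1 ∈ MinBasis 𝔧 ∧ StarCond p.1 p.2})

section

variable {K} {𝔧 : Set (Mon N)} {f : Mon N → MvPolynomial (Fin N) K}

theorem mem_of_forall_mono_mem {M : Submodule K (MvPolynomial (Fin N) K)}
    {p : MvPolynomial (Fin N) K} (h : ∀ u ∈ p.support, mono K u ∈ M) : p ∈ M := by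
  rw [p.as_sum]
  exact Submodule.sum_mem _ fun u hu => by
    simpa [mono, smul_monomial] using M.smul_mem (coeff u p) (h u hu)

theorem mono_mul_mem {M : Submodule K (MvPolynomial (Fin N) K)} {η : Mon N}
    {p : MvPolynomial (Fin N) K} (h : ∀ u ∈ p.support, mono K (η + u) ∈ M) :
    mono K η * p ∈ M := by
  rw [p.as_sum, Finset.mul_sum]
  exact Submodule.sum_mem _ fun u hu => by
    simpa [mono, monomial_mul, smul_monomial] using M.smul_mem (coeff u p) (h u hu)

theorem mem_support_sub_mono {p : MvPolynomial (Fin N) K} {α u : Mon N} (hp : coeff α p = 1)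
    (hu : u ∈ (p - mono K α).support) : u ∈ p.support ∧ u ≠ α := by
  rw [mem_support_iff, coeff_sub, mono, coeff_monomial] at hu
  by_cases huα : u = α
  · subst huα; simp [hp] at hu
  · rw [if_neg (Ne.symm huα), sub_zero] at hu
    exact ⟨mem_support_iff.mpr hu, huα⟩

theorem JmMarkedSet.nhMarkedSet {m : ℕ} (h : JmMarkedSet K 𝔧 m f) : NHMarkedSet K 𝔧 f :=
  fun α hα => ⟨(h α hα).1, fun u hu hne => ((h α hα).2 u hu hne).1⟩

theorem NHMarkedSet.mono_add_mem_starSpan_sup (hf : NHMarkedSet K 𝔧 f) (hJ : StronglyStable 𝔧)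
    {α η : Mon N} (hα : α ∈ MinBasis 𝔧) (hstar : StarCond α η) :
    mono K (α + η) ∈ starSpan K 𝔧 f ⊔ restrictSupport K 𝔧ᶜ := by
  induction hc : toColex η using WellFoundedLT.induction generalizing α η with
  | ind c IH =>
  subst hc
  have hsplit : mono K (α + η) = mono K η * f α - mono K η * (f α - mono K α) := by
    rw [mul_sub, sub_sub_cancel]
    simp only [mono]
    rw [monomial_mul, one_mul, add_comm]
  rw [hsplit]
  refine sub_mem (Submodule.mem_sup_left (Submodule.subset_span ⟨(α, η), ⟨hα, hstar⟩, rfl⟩))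
    (mono_mul_mem fun u hu => ?_)
  obtain ⟨hu, hne⟩ := mem_support_sub_mono (hf α hα).1 hu
  have huJ : u ∉ 𝔧 := (hf α hα).2 u hu hne
  by_cases hηu : η + u ∈ 𝔧
  · obtain ⟨α', η', hα', hstar', heq⟩ := hJ.exists_minBasis_add hηu
    rw [heq]
    exact IH _ (toColex_lt_of_add_eq hJ.1 huJ hα'.1 hstar' (by rw [add_comm, heq])) hα' hstar' rfl
  · exact Submodule.mem_sup_right ((monomial_mem_restrictSupport K).mpr (.inl hηu))

theorem NHMarkedSet.mem_starSpan_sup (hf : NHMarkedSet K 𝔧 f) (hJ : StronglyStable 𝔧)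
    (g : MvPolynomial (Fin N) K) : g ∈ starSpan K 𝔧 f ⊔ restrictSupport K 𝔧ᶜ := by
  refine mem_of_forall_mono_mem fun u _ => ?_
  by_cases hu : u ∈ 𝔧
  · obtain ⟨α, η, hα, hstar, rfl⟩ := hJ.exists_minBasis_add hu
    exact hf.mono_add_mem_starSpan_sup hJ hα hstar
  · exact Submodule.mem_sup_right ((monomial_mem_restrictSupport K).mpr (.inl hu))

theorem starSpan_le_idealG : starSpan K 𝔧 f ≤ (idealG K 𝔧 f).restrictScalars K := by
  rw [starSpan, Submodule.span_le]
  rintro _ ⟨p, hp, rfl⟩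
  exact Ideal.mul_mem_left _ _ (Ideal.subset_span ⟨p.1, hp.1, rfl⟩)

theorem JmMarkedBasis.eq_zero_of_mem_idealG {m : ℕ} (hb : JmMarkedBasis K 𝔧 m f)
    {r : MvPolynomial (Fin N) K} (hr : r ∈ idealG K 𝔧 f) (hrJ : r ∈ restrictSupport K 𝔧ᶜ) :
    r = 0 := by
  set t := max m r.totalDegree
  have hdeg : ∀ u ∈ r.support, mdeg u ≤ t := fun u hu =>
    (le_totalDegree hu).trans (le_max_right _ _)
  have hN : r ∈ spanNLE K 𝔧 t := by
    change r ∈ Submodule.span K ((monomial · 1) '' _)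
    rw [← restrictSupport_eq_span]
    exact fun u hu => ⟨hrJ hu, hdeg u hu⟩
  exact Submodule.disjoint_def.mp (hb.2 t (le_max_left _ _)).1 r hN ⟨hr, hdeg⟩

theorem JmMarkedBasis.mem_starSpan {m : ℕ} (hb : JmMarkedBasis K 𝔧 m f)
    (hJ : StronglyStable 𝔧) {g : MvPolynomial (Fin N) K} (hg : g ∈ idealG K 𝔧 f) :
    g ∈ starSpan K 𝔧 f := by
  obtain ⟨w, hw, r, hr, rfl⟩ := Submodule.mem_sup.mp (hb.1.nhMarkedSet.mem_starSpan_sup hJ g)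
  have hrI : r ∈ idealG K 𝔧 f := by
    simpa using sub_mem hg (starSpan_le_idealG hw)
  rwa [hb.eq_zero_of_mem_idealG hrI hr, add_zero]

end

theorem syzygy_lifting_general {n : ℕ} (K : Type) [Field K]
    (𝔧 : Set (Mon n)) (m : ℕ) (f : Mon n → MvPolynomial (Fin n) K)
    (hss : StronglyStable 𝔧) (hb : JmMarkedBasis K 𝔧 m f) :
    ∀ α₁ ∈ MinBasis 𝔧, ∀ α₂ ∈ MinBasis 𝔧, ∀ (i : Fin n) (δ : Mon n),
      (∀ j : Fin n, α₁ j ≠ 0 → j < i) →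
      Finsupp.single i 1 + α₁ = δ + α₂ →
      StarCond α₂ δ →
      ∃ (s : Finset (Mon n × Mon n)) (c : Mon n × Mon n → K),
        (∀ p ∈ s, p.1 ∈ MinBasis 𝔧 ∧ StarCond p.1 p.2) ∧
        MvPolynomial.X i * f α₁ = ∑ p ∈ s, c p • (mono K p.2 * f p.1) := by
  intro α₁ hα₁ _ _ i _ _ _ _
  have hmem : X i * f α₁ ∈ starSpan K 𝔧 f :=
    hb.mem_starSpan hss (Ideal.mul_mem_left _ _ (Ideal.subset_span ⟨α₁, hα₁, rfl⟩))
  obtain ⟨l, hl, hsum⟩ := (Finsupp.mem_span_image_iff_linearCombination K).mp hmem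
  refine ⟨l.support, l, fun p hp => hl hp, ?_⟩
  rw [← hsum, Finsupp.linearCombination_apply, Finsupp.sum]

/-- if `𝔊` is a `[𝔧,m]`-marked basis, every Eliahou–Kervaire
syzygy `x_i x^{α₁} = x^δ x^{α₂}` (with `x_i > max(x^{α₁})` and
`x^δ x^{α₂} = x^{α₂} ∗_𝔧 x^δ`) lifts to a relation writing `x_i f_{α₁}` as a
combination of multiples `x^{δ_j} f_{α_j}` with `x^{δ_j} x^{α_j} = x^{α_j} ∗_𝔧 x^{δ_j}`. -/
theorem syzygy_lifting {n : ℕ} (K : Type) [Field K]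
    (𝔧 : Set (Mon n)) (m : ℕ) (f : Mon n → MvPolynomial (Fin n) K)
    (hss : StronglyStable 𝔧) (hm : 0 < m) (hb : JmMarkedBasis K 𝔧 m f) :
    ∀ α₁ ∈ MinBasis 𝔧, ∀ α₂ ∈ MinBasis 𝔧, ∀ (i : Fin n) (δ : Mon n),
      (∀ j : Fin n, α₁ j ≠ 0 → j < i) →
      Finsupp.single i 1 + α₁ = δ + α₂ →
      StarCond α₂ δ →
      ∃ (s : Finset (Mon n × Mon n)) (c : Mon n × Mon n → K),
        (∀ p ∈ s, p.1 ∈ MinBasis 𝔧 ∧ StarCond p.1 p.2) ∧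
        MvPolynomial.X i * f α₁ = ∑ p ∈ s, c p • (mono K p.2 * f p.1) :=
  syzygy_lifting_general K 𝔧 m f hss hb

end Paper
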